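/- For the van der Corput sequence in base 2, the limit lim_{N→∞} F_N(s) of the finite empiric pair correlation function exists if and only if 0 ≤ s ≤ 1/2, and in that case the limit equals 0. In particular, the van der Corput sequence in base 2 does not have Poissonian pair correlations. -/

import Mathlib

/-!
The first `2 ^ m` terms of the sequence are the grid `{j / 2 ^ m}` permuted by bit reversal, and
on that grid every point has exactly `2 ⌊s⌋` neighbours within distance `s / 2 ^ m`; so
`F (2 ^ m) s = 2 ⌊s⌋`, and the only possible limit is `2 ⌊s⌋`. For `s ≤ 1 / 2`, taking
`N ≤ 2 ^ m < 2 N`, distinct points among the first `N` are at least `1 / 2 ^ m > s / N` apart, so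
`F N s = 0`. For `s > 1 / 2` the limit does not exist. If `s` is an integer, at `N = 2 ^ m + 1`
the radius `s / N` drops below `s / 2 ^ m`, so the grid pairs at distance exactly `s / 2 ^ m` are
lost while the one new point adds only boundedly many pairs: `F (2 ^ m + 1) s ≤ 2 s - 1`.
Otherwise the radius `s / (2 ^ (k + c) + 2 ^ k)` still catches `2 ⌊s⌋` grid neighbours, while each
of the `2 ^ k` new points, a midpoint of the grid, catches `2 max ⌊s⌋ 1` of them; this keeps `F`
a fixed amount above `2 ⌊s⌋` along that sequence.
-/

open scoped Classical

noncomputable def g2 (n : ℕ) : ℝ :=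
  ∑ j ∈ Finset.range (n + 1), (if n.testBit j then ((2 : ℝ) ^ (j + 1))⁻¹ else 0)

noncomputable def vdc (i : ℕ) : ℝ := g2 (i - 1)

noncomputable def nint (x : ℝ) : ℝ := |x - round x|

noncomputable def F (N : ℕ) (s : ℝ) : ℝ :=
  (((Finset.Icc 1 N ×ˢ Finset.Icc 1 N).filter
      (fun p => p.1 ≠ p.2 ∧ nint (vdc p.1 - vdc p.2) ≤ s / N)).card : ℝ) / N

open Finset Filter Topology

lemma nint_le_abs_sub_intCast (x : ℝ) (z : ℤ) : nint x ≤ |x - z| := round_le x z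

lemma nint_add_intCast (x : ℝ) (z : ℤ) : nint (x + z) = nint x := by
  simp only [nint, round_add_intCast, Int.cast_add, add_sub_add_right_eq_sub]

lemma nint_neg (x : ℝ) : nint (-x) = nint x := by
  rw [nint, nint, abs_sub_round_eq_min, abs_sub_round_eq_min]
  rcases eq_or_ne (Int.fract x) 0 with h | h
  · rw [Int.fract_neg_eq_zero.2 h, h]
  · rw [Int.fract_neg h, sub_sub_cancel, min_comm]

lemma nint_sub_comm (x y : ℝ) : nint (x - y) = nint (y - x) := by
  rw [← nint_neg, neg_sub]

lemma nint_add_le (x y : ℝ) : nint (x + y) ≤ nint x + nint y := by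
  calc nint (x + y) ≤ |x + y - ((round x + round y : ℤ) : ℝ)| := nint_le_abs_sub_intCast _ _
    _ = |(x - round x) + (y - round y)| := by push_cast; ring_nf
    _ ≤ nint x + nint y := abs_add_le _ _

lemma nint_natCast_div {d P : ℕ} (h : d < P) :
    nint ((d : ℝ) / P) = (min d (P - d) : ℕ) / P := by
  rw [nint, abs_sub_round_div_natCast_eq, Nat.mod_eq_of_lt h]

section Grid

variable {P : ℕ}

-- `b ↦ ρ - b (mod P)` is an involution of `range P` carrying one filter onto the other.
lemma card_filter_nint_sub_div {ρ : ℕ} (hρ : ρ < P) (θ ε : ℝ) :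
    #((range P).filter fun b : ℕ => nint ((ρ + θ) / P - b / P) ≤ ε) =
      #((range P).filter fun d : ℕ => nint ((d + θ) / P) ≤ ε) := by
  have hP : (P : ℝ) ≠ 0 := Nat.cast_ne_zero.2 (by omega)
  let reflect : ℕ → ℕ := fun b => if b ≤ ρ then ρ - b else ρ + P - b
  have reflect_lt : ∀ b < P, reflect b < P := fun b hb => by
    simp only [reflect]; split_ifs <;> omega
  have reflect_reflect : ∀ b < P, reflect (reflect b) = b := fun b hb => by
    simp only [reflect]; split_ifs <;> omega
  have nint_reflect : ∀ b < P, nint ((ρ + θ) / P - b / P) = nint ((reflect b + θ) / P) :=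
    fun b hb => by
      simp only [reflect]
      split_ifs with h
      · rw [Nat.cast_sub h]; ring_nf
      · rw [Nat.cast_sub (by omega), ← nint_add_intCast _ 1]
        push_cast
        field_simp
        ring_nf
  refine card_nbij' reflect reflect ?_ ?_ ?_ ?_
  all_goals
    intro b hb
    simp only [coe_filter, Set.mem_ofPred_eq, mem_range] at hb ⊢
  · exact ⟨reflect_lt b hb.1, by rw [← nint_reflect b hb.1]; exact hb.2⟩
  · refine ⟨reflect_lt b hb.1, ?_⟩
    rw [nint_reflect _ (reflect_lt b hb.1), reflect_reflect b hb.1]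
    exact hb.2
  · exact reflect_reflect b hb.1
  · exact reflect_reflect b hb.1

lemma card_filter_nint_div {ε : ℝ} (hε : 0 ≤ ε) (hP : 2 * ⌊ε * P⌋₊ < P) :
    #((range P).filter fun d : ℕ => nint (d / P) ≤ ε) = 2 * ⌊ε * P⌋₊ + 1 := by
  set K := ⌊ε * P⌋₊
  have hP' : (0 : ℝ) < P := by exact_mod_cast (by omega : 0 < P)
  have : (range P).filter (fun d : ℕ => nint (d / P) ≤ ε) =
      range (K + 1) ∪ Ico (P - K) P := by
    ext d
    simp only [mem_filter, mem_range, mem_union, mem_Ico]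
    constructor
    · rintro ⟨hd, h⟩
      rw [nint_natCast_div hd, div_le_iff₀ hP', ← Nat.le_floor_iff (by positivity)] at h
      omega
    · intro h
      have hd : d < P := by omega
      refine ⟨hd, ?_⟩
      rw [nint_natCast_div hd, div_le_iff₀ hP', ← Nat.le_floor_iff (by positivity)]
      omega
  rw [this, card_union_of_disjoint, card_range, Nat.card_Ico]
  · omega
  · rw [disjoint_left]
    intro d h1 h2
    simp only [mem_range, mem_Ico] at h1 h2
    omega

lemma le_card_filter_nint_add_half_div {c : ℕ} {ε : ℝ} (hc : 2 * c ≤ P)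
    (hε : ((c : ℝ) - 1 / 2) / P ≤ ε) :
    2 * c ≤ #((range P).filter fun d : ℕ => nint ((d + 1 / 2) / P) ≤ ε) := by
  calc 2 * c = #(range c ∪ Ico (P - c) P) := by
        rw [card_union_of_disjoint, card_range, Nat.card_Ico]
        · omega
        · rw [disjoint_left]
          intro d h1 h2
          simp only [mem_range, mem_Ico] at h1 h2
          omega
    _ ≤ _ := by
      refine card_le_card fun d hd => ?_
      simp only [mem_union, mem_range, mem_Ico, mem_filter] at hd ⊢
      have hP' : (0 : ℝ) < P := by exact_mod_cast (by omega : 0 < P)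
      refine ⟨by omega, hε.trans' ?_⟩
      rcases hd with hd | hd
      · refine (nint_le_abs_sub_intCast _ 0).trans ?_
        have : (d : ℝ) + 1 ≤ c := by exact_mod_cast hd
        rw [Int.cast_zero, sub_zero, abs_div, abs_of_pos hP', abs_of_pos (by positivity)]
        gcongr
        linarith
      · refine (nint_le_abs_sub_intCast _ 1).trans ?_
        have h1 : (P : ℝ) ≤ d + c := by exact_mod_cast (by omega : P ≤ d + c)
        have h2 : (d : ℝ) + 1 ≤ P := by exact_mod_cast hd.2
        have : ((d : ℝ) + 1 / 2) / P - 1 = (d + 1 / 2 - P) / P := by field_simp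
        rw [Int.cast_one, this, abs_div, abs_of_pos hP', div_le_div_iff_of_pos_right hP', abs_le]
        constructor <;> linarith

lemma card_filter_nint_add_half_div_le {ε : ℝ} (hε : 0 ≤ ε)
    (hP : 2 * ⌊ε * P + 1 / 2⌋₊ < P) :
    #((range P).filter fun d : ℕ => nint ((d + 1 / 2) / P) ≤ ε) ≤ 2 * ⌊ε * P + 1 / 2⌋₊ + 1 := by
  have hP' : (0 : ℝ) < P := by exact_mod_cast (by omega : 0 < P)
  have hscale : (ε + 1 / (2 * P)) * P = ε * P + 1 / 2 := by field_simp
  rw [← hscale] at hP ⊢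
  rw [← card_filter_nint_div (by positivity) hP]
  refine card_le_card fun d hd => ?_
  simp only [mem_filter] at hd ⊢
  refine ⟨hd.1, ?_⟩
  calc nint (d / P) = nint ((d + 1 / 2) / P + -(1 / (2 * P))) := by ring_nf
    _ ≤ nint ((d + 1 / 2) / P) + nint (-(1 / (2 * P))) := nint_add_le _ _
    _ ≤ ε + 1 / (2 * P) := by
      gcongr
      · exact hd.2
      · rw [nint_neg]
        simpa using nint_le_abs_sub_intCast (1 / (2 * P)) 0

end Grid

def bitRev : ℕ → ℕ → ℕ
  | 0, _ => 0
  | m + 1, n => n % 2 * 2 ^ m + bitRev m (n / 2)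

lemma bitRev_lt (m n : ℕ) : bitRev m n < 2 ^ m := by
  induction m generalizing n with
  | zero => simp [bitRev]
  | succ m ih =>
    have := ih (n / 2)
    rcases Nat.mod_two_eq_zero_or_one n with h | h <;> simp only [bitRev, h, pow_succ] <;> omega

lemma bitRev_injOn (m : ℕ) : Set.InjOn (bitRev m) (range (2 ^ m)) := by
  induction m with
  | zero => intro a ha b hb _; simp_all
  | succ m ih =>
    intro a ha b hb hab
    simp only [coe_range, Set.mem_Iio, pow_succ] at ha hb
    simp only [bitRev] at hab
    have hmod : a % 2 = b % 2 := by
      have := bitRev_lt m (a / 2)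
      have := bitRev_lt m (b / 2)
      rcases Nat.mod_two_eq_zero_or_one a with h | h <;>
        rcases Nat.mod_two_eq_zero_or_one b with h' | h' <;>
        simp only [h, h', zero_mul, one_mul, zero_add] at hab <;> omega
    rw [hmod, Nat.add_left_cancel_iff] at hab
    have := ih (mem_range.2 (by omega)) (mem_range.2 (by omega)) hab
    omega

lemma bitRev_bijOn (m : ℕ) : Set.BijOn (bitRev m) (range (2 ^ m)) (range (2 ^ m)) :=
  ((range (2 ^ m)).finite_toSet.injOn_iff_bijOn_of_mapsTo
    fun n _ => mem_range.2 (bitRev_lt m n)).1 (bitRev_injOn m)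

lemma sum_testBit_range_eq {n K K' : ℕ} (hK : n < 2 ^ K) (hK' : n < 2 ^ K') (f : ℕ → ℝ) :
    ∑ j ∈ range K, (if n.testBit j then f j else 0) =
      ∑ j ∈ range K', (if n.testBit j then f j else 0) := by
  wlog h : K ≤ K' generalizing K K'
  · exact (this hK' hK (by omega)).symm
  refine sum_subset (range_subset_range.2 h) fun j hj hjK => ?_
  have hj : n < 2 ^ j := hK.trans_le (Nat.pow_le_pow_right two_pos (by simpa using hjK))
  rw [Nat.testBit_lt_two_pow hj, if_neg Bool.false_ne_true]

lemma g2_eq_sum_range {n K : ℕ} (h : n < 2 ^ K) :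
    g2 n = ∑ j ∈ range K, (if n.testBit j then ((2 : ℝ) ^ (j + 1))⁻¹ else 0) :=
  sum_testBit_range_eq (Nat.lt_two_pow_self.trans (Nat.pow_lt_pow_succ one_lt_two)) h _

lemma g2_zero : g2 0 = 0 := by simp [g2]

lemma g2_eq_div_two (n : ℕ) : g2 n = ((n % 2 : ℕ) + g2 (n / 2)) / 2 := by
  have hn : n < 2 ^ n := Nat.lt_two_pow_self
  rw [g2_eq_sum_range (K := n + 1 + 1) (by rw [pow_succ, pow_succ]; omega),
    g2_eq_sum_range (K := n + 1) (by rw [pow_succ]; omega), sum_range_succ', add_comm, add_div,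
    sum_div]
  congr 1
  · rcases Nat.mod_two_eq_zero_or_one n with h | h <;> simp [Nat.testBit_zero, h]
  · refine sum_congr rfl fun j _ => ?_
    rw [Nat.testBit_add_one]
    split_ifs <;> ring

lemma g2_eq_bitRev_div {m n : ℕ} (h : n < 2 ^ m) : g2 n = bitRev m n / 2 ^ m := by
  induction m generalizing n with
  | zero => simp [show n = 0 by simpa using h, g2_zero, bitRev]
  | succ m ih =>
    rw [g2_eq_div_two, ih (by rw [pow_succ] at h; omega), bitRev]
    push_cast
    field_simp
    ring

lemma g2_two_pow_add {m r : ℕ} (h : r < 2 ^ m) : g2 (2 ^ m + r) = g2 r + 1 / 2 ^ (m + 1) := by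
  induction m generalizing r with
  | zero => simp [show r = 0 by simpa using h, g2_eq_div_two 1, g2_zero]
  | succ m ih =>
    have hmod : (2 ^ (m + 1) + r) % 2 = r % 2 := by rw [pow_succ]; omega
    have hdiv : (2 ^ (m + 1) + r) / 2 = 2 ^ m + r / 2 := by rw [pow_succ]; omega
    rw [g2_eq_div_two, hmod, hdiv, ih (by rw [pow_succ] at h; omega), g2_eq_div_two r]
    ring

section PairCount

variable (x : ℕ → ℝ)

noncomputable def rowCount (a : ℕ) (B : Finset ℕ) (ε : ℝ) : ℕ :=
  #(B.filter fun b => a ≠ b ∧ nint (x a - x b) ≤ ε)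

noncomputable def pairCount (A B : Finset ℕ) (ε : ℝ) : ℕ :=
  #((A ×ˢ B).filter fun p => p.1 ≠ p.2 ∧ nint (x p.1 - x p.2) ≤ ε)

variable {x}

lemma pairCount_eq_sum_rowCount (A B : Finset ℕ) (ε : ℝ) :
    pairCount x A B ε = ∑ a ∈ A, rowCount x a B ε := by
  simp only [pairCount, rowCount, card_filter, sum_product]

lemma pairCount_comm (A B : Finset ℕ) (ε : ℝ) : pairCount x A B ε = pairCount x B A ε := by
  refine card_nbij' Prod.swap Prod.swap ?_ ?_ (fun _ _ => rfl) (fun _ _ => rfl) <;>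
  · rintro ⟨a, b⟩ h
    simp only [coe_filter, mem_product, Set.mem_ofPred_eq, Prod.swap_prod_mk] at h ⊢
    exact ⟨h.1.symm, h.2.1.symm, by rw [nint_sub_comm]; exact h.2.2⟩

lemma pairCount_mono {A A' B B' : Finset ℕ} (hA : A ⊆ A') (hB : B ⊆ B') (ε : ℝ) :
    pairCount x A B ε ≤ pairCount x A' B' ε :=
  card_le_card (filter_subset_filter _ (product_subset_product hA hB))

lemma pairCount_union_left {A B : Finset ℕ} (h : Disjoint A B) (C : Finset ℕ) (ε : ℝ) :
    pairCount x (A ∪ B) C ε = pairCount x A C ε + pairCount x B C ε := by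
  simp only [pairCount_eq_sum_rowCount, sum_union h]

lemma rowCount_union {B C : Finset ℕ} (h : Disjoint B C) (a : ℕ) (ε : ℝ) :
    rowCount x a (B ∪ C) ε = rowCount x a B ε + rowCount x a C ε := by
  rw [rowCount, filter_union, card_union_of_disjoint (disjoint_filter_filter h)]; rfl

lemma pairCount_union_right {B C : Finset ℕ} (h : Disjoint B C) (A : Finset ℕ) (ε : ℝ) :
    pairCount x A (B ∪ C) ε = pairCount x A B ε + pairCount x A C ε := by
  simp only [pairCount_eq_sum_rowCount, rowCount_union h, sum_add_distrib]

lemma pairCount_union_union {A B : Finset ℕ} (h : Disjoint A B) (ε : ℝ) :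
    pairCount x (A ∪ B) (A ∪ B) ε =
      pairCount x A A ε + 2 * pairCount x B A ε + pairCount x B B ε := by
  rw [pairCount_union_left h, pairCount_union_right h, pairCount_union_right h,
    pairCount_comm A B]
  ring

end PairCount

lemma F_eq_pairCount_g2 (N : ℕ) (s : ℝ) :
    F N s = pairCount g2 (range N) (range N) (s / N) / N := by
  rw [F, pairCount]
  congr 2
  refine card_nbij' (Prod.map (· - 1) (· - 1)) (Prod.map (· + 1) (· + 1)) ?_ ?_ ?_ ?_
  all_goals
    rintro ⟨a, b⟩ h
    simp only [coe_filter, mem_product, mem_Icc, mem_range, Set.mem_ofPred_eq, Prod.map] at h ⊢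
  · exact ⟨⟨by omega, by omega⟩, by omega, h.2.2⟩
  · exact ⟨⟨⟨by omega, by omega⟩, by omega, by omega⟩, by omega,
      by simpa only [vdc, Nat.add_sub_cancel] using h.2.2⟩
  · simp only [Prod.mk.injEq]; omega
  · simp

lemma card_filter_g2 (m : ℕ) (p : ℝ → Prop) :
    #((range (2 ^ m)).filter fun n => p (g2 n)) =
      #((range (2 ^ m)).filter fun b : ℕ => p (b / 2 ^ m)) := by
  refine card_nbij (bitRev m) (fun n hn => ?_) ((bitRev_injOn m).mono (filter_subset _ _))
    fun b hb => ?_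
  · simp only [mem_coe, mem_filter, mem_range] at hn ⊢
    exact ⟨bitRev_lt m n, g2_eq_bitRev_div hn.1 ▸ hn.2⟩
  · simp only [mem_coe, mem_filter, mem_range] at hb
    obtain ⟨n, hn, rfl⟩ := (bitRev_bijOn m).surjOn (mem_range.2 hb.1)
    refine ⟨n, ?_, rfl⟩
    simp only [mem_coe, mem_filter, mem_range] at hn ⊢
    exact ⟨hn, g2_eq_bitRev_div hn ▸ hb.2⟩

lemma rowCount_g2_of_lt {m a : ℕ} (ha : a < 2 ^ m) {ε : ℝ} (hε : 0 ≤ ε)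
    (h : 2 * ⌊ε * 2 ^ m⌋₊ < 2 ^ m) :
    rowCount g2 a (range (2 ^ m)) ε = 2 * ⌊ε * 2 ^ m⌋₊ := by
  have hself : a ∈ (range (2 ^ m)).filter fun b => nint (g2 a - g2 b) ≤ ε :=
    mem_filter.2 ⟨mem_range.2 ha, by simpa [nint] using hε⟩
  have herase : (range (2 ^ m)).filter (fun b => a ≠ b ∧ nint (g2 a - g2 b) ≤ ε) =
      ((range (2 ^ m)).filter fun b => nint (g2 a - g2 b) ≤ ε).erase a := by
    ext b
    simp only [mem_filter, mem_erase]
    tauto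
  have hrefl := card_filter_nint_sub_div (P := 2 ^ m) (bitRev_lt m a) 0 ε
  have hgrid := card_filter_nint_div (P := 2 ^ m) hε (by exact_mod_cast h)
  push_cast at hrefl hgrid
  rw [rowCount, herase, card_erase_of_mem hself,
    card_filter_g2 m (fun y => nint (g2 a - y) ≤ ε), g2_eq_bitRev_div ha,
    ← add_zero (bitRev m a : ℝ), hrefl]
  simp only [add_zero, hgrid, Nat.add_sub_cancel]

lemma rowCount_g2_two_pow_add {m r : ℕ} (hr : r < 2 ^ m) (ε : ℝ) :
    rowCount g2 (2 ^ m + r) (range (2 ^ m)) ε =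
      #((range (2 ^ m)).filter fun d : ℕ => nint ((d + 1 / 2) / 2 ^ m) ≤ ε) := by
  have hfilter :
      (range (2 ^ m)).filter (fun b => 2 ^ m + r ≠ b ∧ nint (g2 (2 ^ m + r) - g2 b) ≤ ε) =
        (range (2 ^ m)).filter fun b => nint (g2 (2 ^ m + r) - g2 b) ≤ ε :=
    filter_congr fun b hb => and_iff_right (by rw [mem_range] at hb; omega)
  have hpoint : g2 (2 ^ m + r) = (bitRev m r + 1 / 2) / 2 ^ m := by
    rw [g2_two_pow_add hr, g2_eq_bitRev_div hr, pow_succ]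
    field_simp
  have hrefl := card_filter_nint_sub_div (P := 2 ^ m) (bitRev_lt m r) (1 / 2) ε
  push_cast at hrefl
  rw [rowCount, hfilter, card_filter_g2 m (fun y => nint (g2 (2 ^ m + r) - y) ≤ ε), hpoint,
    hrefl]

lemma pairCount_g2_two_pow {m : ℕ} {ε : ℝ} (hε : 0 ≤ ε)
    (h : 2 * ⌊ε * 2 ^ m⌋₊ < 2 ^ m) :
    pairCount g2 (range (2 ^ m)) (range (2 ^ m)) ε = 2 ^ m * (2 * ⌊ε * 2 ^ m⌋₊) := by
  rw [pairCount_eq_sum_rowCount,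
    sum_congr rfl fun a ha => rowCount_g2_of_lt (mem_range.1 ha) hε h, sum_const, card_range,
    smul_eq_mul]

lemma exists_two_pow_mem_Ico {N : ℕ} (hN : 1 ≤ N) : ∃ m, N ≤ 2 ^ m ∧ 2 ^ m < 2 * N := by
  rcases hN.eq_or_lt with rfl | hN
  · exact ⟨0, by norm_num⟩
  refine ⟨Nat.clog 2 N, Nat.le_pow_clog one_lt_two N, ?_⟩
  have hlt := Nat.pow_pred_clog_lt_self one_lt_two hN
  have hpos := Nat.clog_pos one_lt_two hN
  rw [← Nat.succ_pred_eq_of_pos hpos, pow_succ]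
  omega

lemma F_two_pow {m : ℕ} {s : ℝ} (hs : 0 ≤ s) (h : 2 * ⌊s⌋₊ < 2 ^ m) :
    F (2 ^ m) s = 2 * ⌊s⌋₊ := by
  have hscale : s / ((2 ^ m : ℕ) : ℝ) * 2 ^ m = s := by push_cast; field_simp
  rw [F_eq_pairCount_g2, pairCount_g2_two_pow (by positivity) (by rwa [hscale]), hscale]
  push_cast
  field_simp

lemma F_eq_zero {s : ℝ} (hs0 : 0 ≤ s) (hs : s ≤ 1 / 2) (N : ℕ) : F N s = 0 := by
  rcases Nat.eq_zero_or_pos N with rfl | hN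
  · simp [F]
  obtain ⟨m, hNm, hmN⟩ := exists_two_pow_mem_Ico hN
  have hN' : (0 : ℝ) < N := by exact_mod_cast hN
  have hfloor : ⌊s / N * 2 ^ m⌋₊ = 0 := by
    rw [Nat.floor_eq_zero, div_mul_eq_mul_div, div_lt_one hN']
    have : (2 : ℝ) ^ m < 2 * N := by exact_mod_cast hmN
    nlinarith [mul_le_mul_of_nonneg_right hs (by positivity : (0 : ℝ) ≤ 2 ^ m)]
  have hzero : pairCount g2 (range N) (range N) (s / N) = 0 := by
    refine Nat.eq_zero_of_le_zero ((pairCount_mono (range_subset_range.2 hNm)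
      (range_subset_range.2 hNm) _).trans ?_)
    rw [pairCount_g2_two_pow (by positivity) (by rw [hfloor]; positivity), hfloor, mul_zero,
      mul_zero]
  rw [F_eq_pairCount_g2, hzero, Nat.cast_zero, zero_div]

lemma pairCount_g2_two_pow_add_one_le {m : ℕ} {ε : ℝ} (hε : 0 ≤ ε)
    (h : 2 * ⌊ε * 2 ^ m + 1 / 2⌋₊ < 2 ^ m) :
    pairCount g2 (range (2 ^ m + 1)) (range (2 ^ m + 1)) ε ≤
      2 ^ m * (2 * ⌊ε * 2 ^ m⌋₊) + 2 * (2 * ⌊ε * 2 ^ m + 1 / 2⌋₊ + 1) := by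
  have hgrid : 2 * ⌊ε * 2 ^ m⌋₊ < 2 ^ m :=
    lt_of_le_of_lt (by gcongr; linarith) h
  have hrow : pairCount g2 {2 ^ m} (range (2 ^ m)) ε ≤ 2 * ⌊ε * 2 ^ m + 1 / 2⌋₊ + 1 := by
    have hrow := rowCount_g2_two_pow_add (m := m) (r := 0) (by positivity) ε
    have hhalf := card_filter_nint_add_half_div_le (P := 2 ^ m) hε (by exact_mod_cast h)
    rw [add_zero] at hrow
    push_cast at hhalf
    rw [pairCount_eq_sum_rowCount, sum_singleton, hrow]
    exact hhalf
  have hself : pairCount g2 {2 ^ m} {2 ^ m} ε = 0 := by simp [pairCount]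
  rw [range_add_one, insert_eq, union_comm, pairCount_union_union (by simp),
    pairCount_g2_two_pow hε hgrid, hself]
  omega

lemma F_two_pow_add_one_le {m D : ℕ} (hD : 1 ≤ D) (hm : 2 * D + 3 ≤ 2 ^ m) :
    F (2 ^ m + 1) D ≤ 2 * D - 1 := by
  set ε : ℝ := D / ((2 ^ m + 1 : ℕ) : ℝ)
  have hεP : ε * 2 ^ m < D := by
    rw [div_mul_eq_mul_div, div_lt_iff₀ (by positivity)]
    push_cast
    nlinarith [(by exact_mod_cast hD : (1 : ℝ) ≤ D)]
  have hgrid : ⌊ε * 2 ^ m⌋₊ < D := (Nat.floor_lt (by positivity)).2 hεP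
  have hhalf : ⌊ε * 2 ^ m + 1 / 2⌋₊ < D + 1 :=
    (Nat.floor_lt (by positivity)).2 (by push_cast; linarith)
  have hcount : pairCount g2 (range (2 ^ m + 1)) (range (2 ^ m + 1)) ε ≤
      2 ^ m * (2 * (D - 1)) + 2 * (2 * D + 1) := by
    refine (pairCount_g2_two_pow_add_one_le (by positivity) (by omega)).trans ?_
    have := Nat.mul_le_mul_left (2 ^ m) (by omega : 2 * ⌊ε * 2 ^ m⌋₊ ≤ 2 * (D - 1))
    omega
  rw [F_eq_pairCount_g2, div_le_iff₀ (by positivity)]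
  calc (pairCount g2 (range (2 ^ m + 1)) (range (2 ^ m + 1)) ε : ℝ)
      ≤ ((2 ^ m * (2 * (D - 1)) + 2 * (2 * D + 1) : ℕ) : ℝ) := by exact_mod_cast hcount
    _ ≤ (2 * D - 1) * ((2 ^ m + 1 : ℕ) : ℝ) := by
      have : ((2 * D + 3 : ℕ) : ℝ) ≤ 2 ^ m := by exact_mod_cast hm
      push_cast [Nat.cast_sub hD] at this ⊢
      nlinarith

lemma pairCount_g2_two_pow_add_ge {m M c : ℕ} {ε : ℝ} (hM : M ≤ 2 ^ m) (hc : 2 * c ≤ 2 ^ m)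
    (hε0 : 0 ≤ ε) (hgrid : 2 * ⌊ε * 2 ^ m⌋₊ < 2 ^ m)
    (hε : ((c : ℝ) - 1 / 2) / 2 ^ m ≤ ε) :
    2 ^ m * (2 * ⌊ε * 2 ^ m⌋₊) + 2 * (M * (2 * c)) ≤
      pairCount g2 (range (2 ^ m + M)) (range (2 ^ m + M)) ε := by
  have hsplit : range (2 ^ m + M) = range (2 ^ m) ∪ Ico (2 ^ m) (2 ^ m + M) := by
    rw [range_eq_Ico, range_eq_Ico, Ico_union_Ico_eq_Ico (Nat.zero_le _) (by omega)]
  have hdisj : Disjoint (range (2 ^ m)) (Ico (2 ^ m) (2 ^ m + M)) := by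
    rw [range_eq_Ico]
    exact Ico_disjoint_Ico_consecutive _ _ _
  have hcross : M * (2 * c) ≤ pairCount g2 (Ico (2 ^ m) (2 ^ m + M)) (range (2 ^ m)) ε := by
    rw [pairCount_eq_sum_rowCount]
    calc M * (2 * c) = #(Ico (2 ^ m) (2 ^ m + M)) • (2 * c) := by simp
      _ ≤ _ := card_nsmul_le_sum _ _ _ fun a ha => ?_
    obtain ⟨r, rfl⟩ := Nat.exists_eq_add_of_le (mem_Ico.1 ha).1
    rw [rowCount_g2_two_pow_add (by have := (mem_Ico.1 ha).2; omega)]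
    have := le_card_filter_nint_add_half_div (P := 2 ^ m) (ε := ε) hc (by push_cast; exact hε)
    push_cast at this
    exact this
  rw [hsplit, pairCount_union_union hdisj, pairCount_g2_two_pow hε0 hgrid]
  omega

lemma F_two_pow_add_two_pow_ge {s : ℝ} {D c₀ c k : ℕ} (hs : 0 ≤ s)
    (hD : D * (2 ^ c + 1) ≤ s * 2 ^ c)
    (hc₀ : ((c₀ : ℝ) - 1 / 2) * (2 ^ c + 1) ≤ s * 2 ^ c)
    (hk : 2 * s < 2 ^ k) (hc₀k : 2 * c₀ ≤ 2 ^ k) :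
    (2 * D * 2 ^ c + 4 * c₀) / (2 ^ c + 1) ≤ F (2 ^ (k + c) + 2 ^ k) s := by
  set ε := s / ((2 ^ (k + c) + 2 ^ k : ℕ) : ℝ) with hε_def
  have hN : ((2 ^ (k + c) + 2 ^ k : ℕ) : ℝ) = 2 ^ k * (2 ^ c + 1) := by push_cast; ring
  have hpos : (0 : ℝ) < 2 ^ c + 1 := by positivity
  have hεP : ε * 2 ^ (k + c) = s * 2 ^ c / (2 ^ c + 1) := by
    rw [hε_def, hN, pow_add]; field_simp
  have hεP_le : ε * 2 ^ (k + c) ≤ s := by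
    rw [hεP, div_le_iff₀ hpos]; nlinarith
  have hfloor : D ≤ ⌊ε * 2 ^ (k + c)⌋₊ :=
    Nat.le_floor (by rw [hεP, le_div_iff₀ hpos]; exact hD)
  have hgrid : 2 * ⌊ε * 2 ^ (k + c)⌋₊ < 2 ^ (k + c) := by
    have h1 : (⌊ε * 2 ^ (k + c)⌋₊ : ℝ) ≤ s :=
      (Nat.floor_le (by positivity)).trans hεP_le
    have h2 : (2 : ℝ) ^ k ≤ 2 ^ (k + c) := pow_le_pow_right₀ one_le_two (by omega)
    exact_mod_cast (by linarith : (2 * ⌊ε * 2 ^ (k + c)⌋₊ : ℝ) < 2 ^ (k + c))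
  have hε : ((c₀ : ℝ) - 1 / 2) / 2 ^ (k + c) ≤ ε := by
    rw [hε_def, div_le_div_iff₀ (by positivity) (by positivity), hN, pow_add]
    nlinarith [(by positivity : (0 : ℝ) < 2 ^ k)]
  have hk_le : 2 ^ k ≤ 2 ^ (k + c) := Nat.pow_le_pow_right two_pos (by omega)
  have hcount := pairCount_g2_two_pow_add_ge hk_le (hc₀k.trans hk_le) (by positivity) hgrid hε
  have hcount' : 2 ^ (k + c) * (2 * D) + 2 * (2 ^ k * (2 * c₀)) ≤
      pairCount g2 (range (2 ^ (k + c) + 2 ^ k)) (range (2 ^ (k + c) + 2 ^ k)) ε :=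
    le_trans (by gcongr) hcount
  rw [F_eq_pairCount_g2, ← hε_def, div_le_div_iff₀ hpos (by positivity), hN]
  calc (2 * D * 2 ^ c + 4 * c₀) * (2 ^ k * (2 ^ c + 1))
      = ((2 ^ (k + c) * (2 * D) + 2 * (2 ^ k * (2 * c₀)) : ℕ) : ℝ) * (2 ^ c + 1) := by
        push_cast; ring
    _ ≤ _ := by gcongr

lemma eq_of_tendsto_F {s L : ℝ} (hs : 0 ≤ s) (hL : Tendsto (fun N => F N s) atTop (𝓝 L)) :
    L = 2 * ⌊s⌋₊ := by
  refine tendsto_nhds_unique (hL.comp (tendsto_pow_atTop_atTop_of_one_lt one_lt_two))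
    (tendsto_const_nhds.congr' ?_)
  filter_upwards [eventually_gt_atTop (2 * ⌊s⌋₊)] with m hm
  exact (F_two_pow hs (hm.trans Nat.lt_two_pow_self)).symm

lemma not_tendsto_F_natCast {D : ℕ} (hD : 1 ≤ D) (L : ℝ) :
    ¬ Tendsto (fun N => F N D) atTop (𝓝 L) := by
  intro hL
  have hpow : Tendsto (fun m : ℕ => 2 ^ m) atTop atTop :=
    tendsto_pow_atTop_atTop_of_one_lt one_lt_two
  have hL2 := eq_of_tendsto_F (Nat.cast_nonneg D) hL
  rw [Nat.floor_natCast] at hL2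
  have hle : L ≤ 2 * D - 1 := by
    refine le_of_tendsto (hL.comp ((tendsto_add_atTop_nat 1).comp hpow)) ?_
    filter_upwards [hpow.eventually_ge_atTop (2 * D + 3)] with m hm
    exact F_two_pow_add_one_le hD hm
  linarith

lemma eventually_mul_two_pow_add_one_le {t s : ℝ} (h : t < s) :
    ∀ᶠ c : ℕ in atTop, t * (2 ^ c + 1) ≤ s * 2 ^ c := by
  filter_upwards [((tendsto_pow_atTop_atTop_of_one_lt one_lt_two).const_mul_atTop
    (sub_pos.2 h)).eventually_ge_atTop t] with c hc
  linarith

lemma not_tendsto_F_of_floor_lt {s : ℝ} (hs : 1 / 2 < s) (hfloor : (⌊s⌋₊ : ℝ) < s)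
    (L : ℝ) :
    ¬ Tendsto (fun N => F N s) atTop (𝓝 L) := by
  intro hL
  set D := ⌊s⌋₊
  set c₀ := max D 1
  have hpow : Tendsto (fun m : ℕ => 2 ^ m) atTop atTop :=
    tendsto_pow_atTop_atTop_of_one_lt one_lt_two
  have hL2 := eq_of_tendsto_F (by linarith) hL
  have hc₀ : (c₀ : ℝ) - 1 / 2 < s := by
    rcases le_total D 1 with h | h
    · rw [show c₀ = 1 by omega]; push_cast; linarith
    · rw [show c₀ = D by omega]; linarith
  obtain ⟨c, hcD, hcc₀⟩ := ((eventually_mul_two_pow_add_one_le hfloor).and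
    (eventually_mul_two_pow_add_one_le hc₀)).exists
  have hge : (2 * D * 2 ^ c + 4 * c₀) / (2 ^ c + 1) ≤ L := by
    refine ge_of_tendsto (hL.comp (tendsto_atTop_mono (g := fun k => 2 ^ (k + c) + 2 ^ k)
      (fun k => Nat.le_add_left _ _) hpow)) ?_
    filter_upwards [hpow.eventually_gt_atTop ⌈2 * s⌉₊, hpow.eventually_ge_atTop (2 * c₀)]
      with k hk hk'
    exact F_two_pow_add_two_pow_ge (by linarith) hcD hcc₀
      ((Nat.le_ceil _).trans_lt (by exact_mod_cast hk)) hk'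
  have hc₀D : (D : ℝ) < 2 * c₀ := by exact_mod_cast (by omega : D < 2 * c₀)
  rw [hL2, div_le_iff₀ (by positivity)] at hge
  linarith

lemma not_exists_tendsto_F {s : ℝ} (hs : 1 / 2 < s) :
    ¬ ∃ L, Tendsto (fun N => F N s) atTop (𝓝 L) := by
  rintro ⟨L, hL⟩
  rcases (Nat.floor_le (by linarith : 0 ≤ s)).eq_or_lt with h | h
  · have hD : 1 ≤ ⌊s⌋₊ := Nat.one_le_iff_ne_zero.2 fun h0 => by
      rw [h0, Nat.cast_zero] at h
      linarith
    rw [← h] at hL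
    exact not_tendsto_F_natCast hD L hL
  · exact not_tendsto_F_of_floor_lt hs h L hL

theorem stmt10 :
    (∀ s : ℝ, 0 ≤ s →
      ((∃ L : ℝ, Filter.Tendsto (fun N => F N s) Filter.atTop (nhds L)) ↔ s ≤ 1 / 2)) ∧
    (∀ s : ℝ, 0 ≤ s → s ≤ 1 / 2 →
      Filter.Tendsto (fun N => F N s) Filter.atTop (nhds 0)) ∧
    ¬ (∀ s : ℝ, 0 ≤ s →
      Filter.Tendsto (fun N => F N s) Filter.atTop (nhds (2 * s))) := by
  have hzero : ∀ s : ℝ, 0 ≤ s → s ≤ 1 / 2 → Tendsto (fun N => F N s) atTop (𝓝 0) :=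
    fun s hs0 hs => by simp only [F_eq_zero hs0 hs, tendsto_const_nhds]
  refine ⟨fun s hs0 => ⟨fun hL => ?_, fun hs => ⟨0, hzero s hs0 hs⟩⟩, hzero, fun h => ?_⟩
  · by_contra hs
    exact not_exists_tendsto_F (not_le.1 hs) hL
  · have := tendsto_nhds_unique (h (1 / 2) (by norm_num)) (hzero (1 / 2) (by norm_num) le_rfl)
    norm_num at this
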